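/- arXiv:2205.03991 — 6 statements merged into one kernel-verified Lean document; each statement's English description precedes it below -/
import Mathlib

section
/- Let V̄ = V ⊍ V_I be a finite set, α : V̄×V̄ → ℝ antisymmetric (α(y,x) = −α(x,y)) with α(x,y) = 0 whenever x,y ∈ V_I, and Θ : V̄×V̄ → ℝ symmetric and nonnegative. Define Ω : V×V → ℝ by Ω(x,y) = Θ(x,y)α(x,y)² for x ≠ y and Ω(x,x) = Θ(x,x), and λ(x) = Σ_{y∈V̄} Θ(x,y)α(x,y)² + Θ(x,x). Then for every f : V̄ → ℝ with f = 0 on V_I and every x ∈ V one has Σ_{y∈V} Ω(x,y) f(y) = ½·D^α(Θ·G^α(f))(x) + λ(x)·f(x), where Θ·G^α(f) denotes the pointwise product (x,y) ↦ Θ(x,y)·G^α(f)(x,y). -/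
open Finset

noncomputable section

/-- Nonlocal divergence operator `D^α F (x) = ∑_y (F x y α x y − F y x α y x)`. -/
def nlDiv {W : Type*} [Fintype W] (α F : W → W → ℝ) (x : W) : ℝ :=
  ∑ y, (F x y * α x y - F y x * α y x)

/-- Nonlocal gradient operator `G^α f (x,y) = (f y − f x) α x y`. -/
def nlGrad {W : Type*} (α : W → W → ℝ) (f : W → ℝ) (x y : W) : ℝ :=
  (f y - f x) * α x y

theorem statement0 {V VI : Type*} [Fintype V] [Fintype VI] [DecidableEq V]
    (α Θ : (V ⊕ VI) → (V ⊕ VI) → ℝ)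
    (hα : ∀ x y, α y x = - α x y)
    (hαI : ∀ x y : VI, α (Sum.inr x) (Sum.inr y) = 0)
    (hΘsymm : ∀ x y, Θ x y = Θ y x)
    (hΘnn : ∀ x y, 0 ≤ Θ x y)
    (Ω : V → V → ℝ)
    (hΩ : ∀ x y : V, Ω x y =
      if x = y then Θ (Sum.inl x) (Sum.inl x)
      else Θ (Sum.inl x) (Sum.inl y) * (α (Sum.inl x) (Sum.inl y)) ^ 2)
    (lam : V → ℝ)
    (hlam : ∀ x : V,
      lam x = (∑ y, Θ (Sum.inl x) y * (α (Sum.inl x) y) ^ 2) + Θ (Sum.inl x) (Sum.inl x))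
    (f : (V ⊕ VI) → ℝ) (hf : ∀ z : VI, f (Sum.inr z) = 0) (x : V) :
    ∑ y, Ω x y * f (Sum.inl y)
      = (1 / 2) * nlDiv α (fun p q => Θ p q * nlGrad α f p q) (Sum.inl x)
        + lam x * f (Sum.inl x) := by
  have hαz : ∀ z, α z z = 0 := fun z => by have := hα z z; linarith
  have hL : ∑ y, Ω x y * f (Sum.inl y)
      = (∑ y : V, Θ (Sum.inl x) (Sum.inl y) * f (Sum.inl y) * (α (Sum.inl x) (Sum.inl y)) ^ 2)
        + Θ (Sum.inl x) (Sum.inl x) * f (Sum.inl x) := by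
    have h1 : ∀ y : V, Ω x y * f (Sum.inl y)
        = Θ (Sum.inl x) (Sum.inl y) * f (Sum.inl y) * (α (Sum.inl x) (Sum.inl y)) ^ 2
          + (if x = y then Θ (Sum.inl x) (Sum.inl x) * f (Sum.inl x) else 0) := by
      intro y
      rw [hΩ]
      by_cases h : x = y
      · subst h; simp [hαz]
      · simp [h]; ring
    rw [Finset.sum_congr rfl (fun y _ => h1 y), Finset.sum_add_distrib,
      Finset.sum_ite_eq univ x (fun _ => Θ (Sum.inl x) (Sum.inl x) * f (Sum.inl x))]
    simp
  have hR : nlDiv α (fun p q => Θ p q * nlGrad α f p q) (Sum.inl x)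
      = ∑ y : V ⊕ VI, 2 * (Θ (Sum.inl x) y * (f y - f (Sum.inl x)) * (α (Sum.inl x) y) ^ 2) := by
    unfold nlDiv nlGrad
    refine Finset.sum_congr rfl fun y _ => ?_
    simp only [hα (Sum.inl x) y, hΘsymm y (Sum.inl x)]; ring
  have hsum : (1 / 2 : ℝ) * nlDiv α (fun p q => Θ p q * nlGrad α f p q) (Sum.inl x)
      = (∑ y : V ⊕ VI, Θ (Sum.inl x) y * f y * (α (Sum.inl x) y) ^ 2)
        - (∑ y : V ⊕ VI, Θ (Sum.inl x) y * (α (Sum.inl x) y) ^ 2) * f (Sum.inl x) := by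
    rw [hR, Finset.mul_sum, Finset.sum_mul, ← Finset.sum_sub_distrib]
    refine Finset.sum_congr rfl fun y _ => ?_
    ring
  have hsum2 : ∑ y : V ⊕ VI, Θ (Sum.inl x) y * f y * (α (Sum.inl x) y) ^ 2
      = ∑ y : V, Θ (Sum.inl x) (Sum.inl y) * f (Sum.inl y) * (α (Sum.inl x) (Sum.inl y)) ^ 2 := by
    rw [Fintype.sum_sum_type]
    simp [hf]
  rw [hL, hlam, hsum, hsum2]
  ring
end
end

section
/- Let V̄ = V ⊍ V_I be a finite set, α : V̄×V̄ → ℝ antisymmetric (α(y,x) = −α(x,y)) with α(x,y) = 0 whenever x,y ∈ V_I, and Θ : V̄×V̄ → ℝ symmetric and nonnegative. Define Ω, λ as: Ω(x,y) = Θ(x,y)α(x,y)² for x ≠ y, Ω(x,x) = Θ(x,x), λ(x) = Σ_{y∈V̄} Θ(x,y)α(x,y)² + Θ(x,x). Let S : ℝ≥0 → (V → S°) be a curve differentiable in t, and let S̄(t) : V̄ → ℝ^c be its extension by zero on V_I. Then S satisfies d/dt S(x,t) = R_{S(x,t)}((ΩS)(x,t)) for all x ∈ V and t ≥ 0 if and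 only if it satisfies d/dt S(x,t) = R_{S(x,t)}( ½·D^α(Θ·G^α(S̄))(x,t) + λ(x)·S̄(x,t) ) for all x ∈ V and t ≥ 0, where D^α and G^α act componentwise on ℝ^c-valued functions. -/
open Finset

noncomputable section

/-- Replicator map `R_p u = Diag(p)u − ⟨p,u⟩p`. -/
def repl {c : ℕ} (p u : Fin c → ℝ) (j : Fin c) : ℝ :=
  p j * u j - (∑ i, p i * u i) * p j

/-- Extension of a vector field on `V` by zero to `V ⊕ VI`. -/
def extZero {V VI : Type*} {c : ℕ} (S : V → Fin c → ℝ) : (V ⊕ VI) → Fin c → ℝ :=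
  Sum.elim S (fun _ _ => 0)

theorem statement2 {V VI : Type*} [Fintype V] [Fintype VI] [DecidableEq V] {c : ℕ}
    (α Θ : (V ⊕ VI) → (V ⊕ VI) → ℝ)
    (hα : ∀ x y, α y x = - α x y)
    (hαI : ∀ x y : VI, α (Sum.inr x) (Sum.inr y) = 0)
    (hΘsymm : ∀ x y, Θ x y = Θ y x)
    (hΘnn : ∀ x y, 0 ≤ Θ x y)
    (Ω : V → V → ℝ)
    (hΩ : ∀ x y : V, Ω x y =
      if x = y then Θ (Sum.inl x) (Sum.inl x)
      else Θ (Sum.inl x) (Sum.inl y) * (α (Sum.inl x) (Sum.inl y)) ^ 2)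
    (lam : V → ℝ)
    (hlam : ∀ x : V,
      lam x = (∑ y, Θ (Sum.inl x) y * (α (Sum.inl x) y) ^ 2) + Θ (Sum.inl x) (Sum.inl x))
    (S : ℝ → V → Fin c → ℝ)
    (hmem : ∀ t, 0 ≤ t → ∀ x, (∀ j, 0 < S t x j) ∧ ∑ j, S t x j = 1)
    (hdiff : ∀ x j, Differentiable ℝ (fun t => S t x j)) :
    (∀ t, 0 ≤ t → ∀ (x : V) (j : Fin c),
        deriv (fun τ => S τ x j) t
          = repl (S t x) (fun i => ∑ y, Ω x y * S t y i) j)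
    ↔ (∀ t, 0 ≤ t → ∀ (x : V) (j : Fin c),
        deriv (fun τ => S τ x j) t
          = repl (S t x) (fun i =>
              (1 / 2) * nlDiv α (fun p q => Θ p q *
                  nlGrad α (fun z => extZero (VI := VI) (S t) z i) p q) (Sum.inl x)
              + lam x * extZero (VI := VI) (S t) (Sum.inl x) i) j) := by
  have hα0 : ∀ x, α x x = 0 := fun x => by have := hα x x; linarith
  have key : ∀ t (x : V) (i : Fin c),
      (1 / 2) * nlDiv α (fun p q => Θ p q *
          nlGrad α (fun z => extZero (VI := VI) (S t) z i) p q) (Sum.inl x)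
        + lam x * extZero (VI := VI) (S t) (Sum.inl x) i
      = ∑ y, Ω x y * S t y i := by
    intro t x i
    set f : (V ⊕ VI) → ℝ := fun z => extZero (VI := VI) (S t) z i with hf
    set A : (V ⊕ VI) → ℝ := fun y => Θ (Sum.inl x) y * (α (Sum.inl x) y) ^ 2 with hA
    have hfx : f (Sum.inl x) = S t x i := rfl
    have hdivA : nlDiv α (fun p q => Θ p q * nlGrad α f p q) (Sum.inl x)
        = ∑ y, 2 * (A y * (f y - f (Sum.inl x))) := by
      unfold nlDiv nlGrad
      refine Finset.sum_congr rfl fun y _ => ?_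
      dsimp only
      rw [hΘsymm y (Sum.inl x), hα (Sum.inl x) y]
      simp only [hA]
      ring
    rw [hdivA, hlam, hfx]
    have e1 : (1 / 2 : ℝ) * (∑ y, 2 * (A y * (f y - S t x i)))
        = (∑ y, A y * f y) - (∑ y, A y) * S t x i := by
      rw [Finset.mul_sum, Finset.sum_mul, ← Finset.sum_sub_distrib]
      exact Finset.sum_congr rfl fun y _ => by ring
    rw [e1]
    have e2 : (∑ y, A y * f y)
        = ∑ y : V, A (Sum.inl y) * S t y i := by
      rw [Fintype.sum_sum_type]
      have : (∑ y : VI, A (Sum.inr y) * f (Sum.inr y)) = 0 := by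
        apply Finset.sum_eq_zero; intro y _; simp [hf, extZero]
      rw [this, add_zero]
      rfl
    rw [e2]
    have hAx : A (Sum.inl x) = 0 := by simp [hA, hα0]
    have e3 : (∑ y : V, A (Sum.inl y) * S t y i)
        = ∑ y ∈ Finset.univ.erase x, A (Sum.inl y) * S t y i := by
      rw [← Finset.add_sum_erase _ _ (Finset.mem_univ x), hAx, zero_mul, zero_add]
    have e4 : (∑ y, Ω x y * S t y i)
        = Θ (Sum.inl x) (Sum.inl x) * S t x i
          + ∑ y ∈ Finset.univ.erase x, A (Sum.inl y) * S t y i := by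
      rw [← Finset.add_sum_erase _ _ (Finset.mem_univ x), hΩ x x, if_pos rfl]
      congr 1
      refine Finset.sum_congr rfl fun y hy => ?_
      rw [hΩ x y, if_neg (Finset.ne_of_mem_erase hy).symm]
    rw [e3, e4]
    have hext : extZero (VI := VI) (S t) (Sum.inl x) i = S t x i := rfl
    rw [hext]
    simp only [hA]
    ring
  constructor
  · intro h t ht x j
    rw [h t ht x j]
    congr 1
    funext i
    exact (key t x i).symm
  · intro h t ht x j
    rw [h t ht x j]
    congr 1
    funext i
    exact key t x i
end
end

section
/- Let γ > 0 and w ∈ ℝ^c. The function s ↦ γ·⟨s, log s⟩ − ⟨w, s⟩ (with the convention 0·log 0 = 0) attains a unique minimum over the closed probability simplex Δ_c ⊂ ℝ^c, namely at s* = e^{w/γ}/⟨1, e^{w/γ}⟩ (componentwise exponential). Consequently, for p ∈ relint Δ_c and u ∈ ℝ^c, the unique minimizer over Δ_c of s ↦ γ·⟨s, log s⟩ − ⟨u + γ·log p, s⟩ equals exp_p(γ^{-1}u); that is, the two-step DC-programming iteration with the entropy-regularized decomposition coincides with the geometric Euler step with step size h = 1/γ. -/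
open Finset

noncomputable section

/-- Lifting map `exp_p(v) = (p ⊙ e^v)/⟨p, e^v⟩`. -/
def liftMap {c : ℕ} (p v : Fin c → ℝ) (j : Fin c) : ℝ :=
  p j * Real.exp (v j) / (∑ i, p i * Real.exp (v i))

lemma pt_ineq (q x : ℝ) (hq : 0 < q) (hx : 0 ≤ x) :
    x - q ≤ x * Real.log x - x * Real.log q ∧
      (x ≠ q → x - q < x * Real.log x - x * Real.log q) := by
  rcases eq_or_lt_of_le hx with h0 | h0
  · constructor
    · simp [← h0]; linarith
    · intro _; simp [← h0]; linarith
  · have hqx : 0 < q / x := div_pos hq h0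
    have h1 : Real.log (q / x) ≤ q / x - 1 := Real.log_le_sub_one_of_pos hqx
    have hlog : Real.log (q / x) = Real.log q - Real.log x :=
      Real.log_div hq.ne' h0.ne'
    have hdiv : x * (q / x) = q := by field_simp
    constructor
    · nlinarith [mul_le_mul_of_nonneg_left h1 hx]
    · intro hne
      have hne1 : q / x ≠ 1 := by
        intro h; apply hne; field_simp at h; linarith
      have h2 : Real.log (q / x) < q / x - 1 :=
        Real.log_lt_sub_one_of_pos hqx hne1
      nlinarith [mul_lt_mul_of_pos_left h2 h0]

lemma core {c : ℕ} (γ : ℝ) (hγ : 0 < γ) (q : Fin c → ℝ) (hq : ∀ j, 0 < q j)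
    (hq1 : ∑ j, q j = 1) (v : Fin c → ℝ) (C : ℝ)
    (hv : ∀ j, v j = γ * Real.log (q j) + C)
    (s : Fin c → ℝ) (hs0 : ∀ j, 0 ≤ s j) (hs1 : ∑ j, s j = 1) (hne : s ≠ q) :
    γ * (∑ j, q j * Real.log (q j)) - (∑ j, v j * q j)
      < γ * (∑ j, s j * Real.log (s j)) - (∑ j, v j * s j) := by
  have hv1 : ∀ t : Fin c → ℝ, (∑ j, t j) = 1 →
      ∑ j, v j * t j = γ * (∑ j, Real.log (q j) * t j) + C := by
    intro t ht
    simp only [hv, add_mul]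
    rw [Finset.sum_add_distrib]
    simp only [mul_assoc]
    rw [← Finset.mul_sum, ← Finset.mul_sum, ht, mul_one]
  -- KL positivity
  have hKL : 0 < ∑ j, (s j * Real.log (s j) - s j * Real.log (q j)) := by
    have h0 : ∑ j, (s j - q j) = 0 := by
      rw [Finset.sum_sub_distrib, hs1, hq1]; ring
    obtain ⟨i, hi⟩ := Function.ne_iff.mp hne
    have hlt : ∑ j, (s j - q j) < ∑ j, (s j * Real.log (s j) - s j * Real.log (q j)) := by
      apply Finset.sum_lt_sum
      · intro j _; exact (pt_ineq (q j) (s j) (hq j) (hs0 j)).1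
      · exact ⟨i, Finset.mem_univ i, (pt_ineq (q i) (s i) (hq i) (hs0 i)).2 hi⟩
    linarith
  rw [hv1 s hs1, hv1 q hq1]
  have e1 : ∑ j, Real.log (q j) * q j = ∑ j, q j * Real.log (q j) := by
    simp [mul_comm]
  have e2 : ∑ j, (s j * Real.log (s j) - s j * Real.log (q j))
      = (∑ j, s j * Real.log (s j)) - ∑ j, s j * Real.log (q j) :=
    Finset.sum_sub_distrib _ _
  have e3 : ∑ j, Real.log (q j) * s j = ∑ j, s j * Real.log (q j) := by
    simp [mul_comm]
  rw [e1, e3]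
  nlinarith [mul_pos hγ hKL]

theorem statement5 {c : ℕ} (hc : 0 < c) (γ : ℝ) (hγ : 0 < γ) (w : Fin c → ℝ) :
    (let sstar : Fin c → ℝ := fun j => Real.exp (w j / γ) / ∑ i, Real.exp (w i / γ)
     ((∀ j, 0 ≤ sstar j) ∧ ∑ j, sstar j = 1) ∧
      ∀ s : Fin c → ℝ, ((∀ j, 0 ≤ s j) ∧ ∑ j, s j = 1) → s ≠ sstar →
        γ * (∑ j, sstar j * Real.log (sstar j)) - (∑ j, w j * sstar j)
          < γ * (∑ j, s j * Real.log (s j)) - (∑ j, w j * s j))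
    ∧ ∀ p : Fin c → ℝ, ((∀ j, 0 < p j) ∧ ∑ j, p j = 1) → ∀ u : Fin c → ℝ,
        (let m : Fin c → ℝ := liftMap p (fun j => u j / γ)
         ((∀ j, 0 ≤ m j) ∧ ∑ j, m j = 1) ∧
          ∀ s : Fin c → ℝ, ((∀ j, 0 ≤ s j) ∧ ∑ j, s j = 1) → s ≠ m →
            γ * (∑ j, m j * Real.log (m j)) - (∑ j, (u j + γ * Real.log (p j)) * m j)
              < γ * (∑ j, s j * Real.log (s j)) - (∑ j, (u j + γ * Real.log (p j)) * s j)) := by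
  have hne : (Finset.univ : Finset (Fin c)).Nonempty := ⟨⟨0, hc⟩, Finset.mem_univ _⟩
  constructor
  · intro sstar
    have hZ : 0 < ∑ i, Real.exp (w i / γ) :=
      Finset.sum_pos (fun i _ => Real.exp_pos _) hne
    have hqpos : ∀ j, 0 < sstar j := fun j => div_pos (Real.exp_pos _) hZ
    have hsum : ∑ j, sstar j = 1 := by
      show (∑ j, Real.exp (w j / γ) / ∑ i, Real.exp (w i / γ)) = 1
      rw [← Finset.sum_div, div_self hZ.ne']
    refine ⟨⟨fun j => (hqpos j).le, hsum⟩, ?_⟩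
    intro s hs hsne
    have hv : ∀ j, w j = γ * Real.log (sstar j) + γ * Real.log (∑ i, Real.exp (w i / γ)) := by
      intro j
      show w j = γ * Real.log (Real.exp (w j / γ) / ∑ i, Real.exp (w i / γ)) + _
      rw [Real.log_div (Real.exp_ne_zero _) hZ.ne', Real.log_exp]
      field_simp
      ring
    exact core γ hγ sstar hqpos hsum w _ hv s hs.1 hs.2 hsne
  · intro p hp u m
    have hZ : 0 < ∑ i, p i * Real.exp (u i / γ) :=
      Finset.sum_pos (fun i _ => mul_pos (hp.1 i) (Real.exp_pos _)) hne
    have hqpos : ∀ j, 0 < m j := fun j =>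
      div_pos (mul_pos (hp.1 j) (Real.exp_pos _)) hZ
    have hsum : ∑ j, m j = 1 := by
      show (∑ j, p j * Real.exp (u j / γ) / ∑ i, p i * Real.exp (u i / γ)) = 1
      rw [← Finset.sum_div, div_self hZ.ne']
    refine ⟨⟨fun j => (hqpos j).le, hsum⟩, ?_⟩
    intro s hs hsne
    have hv : ∀ j, u j + γ * Real.log (p j)
        = γ * Real.log (m j) + γ * Real.log (∑ i, p i * Real.exp (u i / γ)) := by
      intro j
      show _ = γ * Real.log (p j * Real.exp (u j / γ) / ∑ i, p i * Real.exp (u i / γ)) + _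
      rw [Real.log_div (mul_ne_zero (hp.1 j).ne' (Real.exp_ne_zero _)) hZ.ne',
        Real.log_mul (hp.1 j).ne' (Real.exp_ne_zero _), Real.log_exp]
      field_simp
      ring
    exact core γ hγ m hqpos hsum _ _ hv s hs.1 hs.2 hsne

end
end

section
/- Let V be a finite set with n = |V|, c ≥ 2, Ω : V×V → ℝ symmetric with smallest eigenvalue λ_min(Ω), and γ > |λ_min(Ω)|. Define h(S) = ½ Σ_{x∈V} ⟨S(x),(ΩS)(x)⟩ + γ·Σ_{x∈V} ⟨S(x), log S(x)⟩ for S ∈ W. Then for every S ∈ W and every unit vector v ∈ ℝ^{n·c}, the second derivative of h satisfies d²h(S)(v,v) = ⟨v, ((Ω ⊗ I_c) + γ·Diag(1/s))·v⟩ > λ_min(Ω) + γ > 0, where s ∈ ℝ^{n·c} is the row-stacked vector of S and ⊗ denotes the Kronecker product; in particular h is strictly convex on W. -/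
open Finset

lemma aux_quad_lb {V : Type*} [Fintype V] (Ω : V → V → ℝ) (hsymm : ∀ x y, Ω x y = Ω y x)
    (lammin : ℝ)
    (hlb : ∀ μ : ℝ, (∃ v : V → ℝ, v ≠ 0 ∧ ∀ x, ∑ y, Ω x y * v y = μ * v x) → lammin ≤ μ)
    (u : V → ℝ) :
    lammin * ∑ x, u x ^ 2 ≤ ∑ x, ∑ y, Ω x y * u x * u y := by
  classical
  set A : Matrix V V ℝ := Matrix.of Ω with hA
  set M : Matrix V V ℝ := A - lammin • 1 with hM
  have hMH : M.IsHermitian := by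
    unfold Matrix.IsHermitian
    ext i j
    by_cases h : i = j
    · subst h; simp [hM, hA]
    · simp [hM, hA, Matrix.conjTranspose_apply, Matrix.one_apply, Matrix.sub_apply, h,
        Ne.symm h, hsymm i j]
  have heignn : ∀ i, 0 ≤ hMH.eigenvalues i := by
    intro i
    have hev := hMH.mulVec_eigenvectorBasis i
    set e : V → ℝ := ⇑(hMH.eigenvectorBasis i) with he
    have hene : e ≠ 0 := by
      have := hMH.eigenvectorBasis.orthonormal.ne_zero i
      intro h0
      apply this
      ext x
      exact congrFun h0 x
    have hAe : ∀ x, ∑ y, Ω x y * e y = (hMH.eigenvalues i + lammin) * e x := by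
      intro x
      have h1 : (M.mulVec e) x = hMH.eigenvalues i * e x := by rw [hev]; simp
      have h2 : (M.mulVec e) x = (∑ y, Ω x y * e y) - lammin * e x := by
        simp only [hM, Matrix.sub_mulVec, Matrix.smul_mulVec, Matrix.one_mulVec,
          Pi.sub_apply, Pi.smul_apply, smul_eq_mul]
        simp [Matrix.mulVec, dotProduct, hA]
      rw [h2] at h1
      linarith
    have := hlb (hMH.eigenvalues i + lammin) ⟨e, hene, hAe⟩
    linarith
  have hPSD : M.PosSemidef := hMH.posSemidef_iff_eigenvalues_nonneg.mpr heignn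
  have h0 := hPSD.dotProduct_mulVec_nonneg u
  simp only [dotProduct, Matrix.mulVec, star_trivial, hM, Matrix.sub_apply,
    Matrix.smul_apply, Matrix.one_apply, hA, Matrix.of_apply, smul_eq_mul] at h0
  have hexp : ∑ x, u x * ∑ y, (Ω x y - lammin * (if x = y then 1 else 0)) * u y
      = (∑ x, ∑ y, Ω x y * u x * u y) - lammin * ∑ x, u x ^ 2 := by
    rw [Finset.mul_sum, ← Finset.sum_sub_distrib]
    refine Finset.sum_congr rfl fun x _ => ?_
    have : u x * ∑ y, (Ω x y - lammin * (if x = y then 1 else 0)) * u y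
        = ∑ y, (Ω x y * u x * u y - (if x = y then lammin * (u x * u y) else 0)) := by
      rw [Finset.mul_sum]
      refine Finset.sum_congr rfl fun y _ => ?_
      by_cases h : x = y <;> simp [h] <;> ring
    rw [this, Finset.sum_sub_distrib, Finset.sum_ite_eq]
    simp only [mem_univ, if_true]
    ring
  rw [hexp] at h0
  linarith

noncomputable section AuxCalc

variable {V : Type*} [Fintype V] {c : ℕ}

/-- evaluation at coordinate (x,j) as a continuous linear map -/
def auxEv (x : V) (j : Fin c) : (V → Fin c → ℝ) →L[ℝ] ℝ :=
  ((ContinuousLinearMap.proj j : (Fin c → ℝ) →L[ℝ] ℝ).comp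
    (ContinuousLinearMap.proj x : (V → Fin c → ℝ) →L[ℝ] (Fin c → ℝ)))

@[simp] lemma auxEv_apply (x : V) (j : Fin c) (S : V → Fin c → ℝ) : auxEv x j S = S x j := rfl

def auxD1 (Ω : V → V → ℝ) (γ : ℝ) : (V → Fin c → ℝ) → ((V → Fin c → ℝ) →L[ℝ] ℝ) :=
  fun T => ∑ x, ∑ j, ((∑ y, Ω x y * T y j) + γ * (Real.log (T x j) + 1)) • auxEv x j

def auxD2 (Ω : V → V → ℝ) (γ : ℝ) (T : V → Fin c → ℝ) :
    (V → Fin c → ℝ) →L[ℝ] (V → Fin c → ℝ) →L[ℝ] ℝ :=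
  ∑ x, ∑ j, ((∑ y, Ω x y • auxEv y j) + γ • ((T x j)⁻¹ • auxEv x j)).smulRight (auxEv x j)

lemma aux_swap (Ω : V → V → ℝ) (hsymm : ∀ x y, Ω x y = Ω y x) (T w : V → Fin c → ℝ) :
    ∑ x, ∑ j, T x j * ∑ y, Ω x y * w y j = ∑ x, ∑ j, (∑ y, Ω x y * T y j) * w x j := by
  have step1 : ∑ x, ∑ j, T x j * ∑ y, Ω x y * w y j
      = ∑ x, ∑ y, ∑ j, Ω x y * T x j * w y j := by
    refine Finset.sum_congr rfl fun x _ => ?_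
    calc ∑ j, T x j * ∑ y, Ω x y * w y j
        = ∑ j, ∑ y, Ω x y * T x j * w y j := by
          refine Finset.sum_congr rfl fun j _ => ?_
          rw [Finset.mul_sum]
          exact Finset.sum_congr rfl fun y _ => by ring
      _ = ∑ y, ∑ j, Ω x y * T x j * w y j := Finset.sum_comm
  have step2 : ∑ x, ∑ j, (∑ y, Ω x y * T y j) * w x j
      = ∑ x, ∑ y, ∑ j, Ω y x * T y j * w x j := by
    refine Finset.sum_congr rfl fun x _ => ?_
    calc ∑ j, (∑ y, Ω x y * T y j) * w x j
        = ∑ j, ∑ y, Ω y x * T y j * w x j := by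
          refine Finset.sum_congr rfl fun j _ => ?_
          rw [Finset.sum_mul]
          exact Finset.sum_congr rfl fun y _ => by rw [hsymm x y]
      _ = ∑ y, ∑ j, Ω y x * T y j * w x j := Finset.sum_comm
  rw [step1, step2, Finset.sum_comm]

lemma aux_hasD1 (Ω : V → V → ℝ) (hsymm : ∀ x y, Ω x y = Ω y x) (γ : ℝ)
    (T : V → Fin c → ℝ) (hT : ∀ x j, T x j ≠ 0) :
    HasFDerivAt (fun S : V → Fin c → ℝ =>
        (1 / 2) * (∑ x, ∑ j, S x j * ∑ y, Ω x y * S y j)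
          + γ * ∑ x, ∑ j, S x j * Real.log (S x j))
      (auxD1 Ω γ T) T := by
  have base : ∀ (x : V) (j : Fin c),
      HasFDerivAt (fun S : V → Fin c → ℝ => S x j) (auxEv x j) T :=
    fun x j => (auxEv x j).hasFDerivAt
  have hinner : ∀ (x : V) (j : Fin c),
      HasFDerivAt (fun S : V → Fin c → ℝ => ∑ y, Ω x y * S y j)
        (∑ y, Ω x y • auxEv y j) T :=
    fun x j => HasFDerivAt.fun_sum fun y _ => (base y j).const_mul (Ω x y)
  have hquad : HasFDerivAt (fun S : V → Fin c → ℝ => ∑ x, ∑ j, S x j * ∑ y, Ω x y * S y j)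
      (∑ x, ∑ j, (T x j • (∑ y, Ω x y • auxEv y j) + (∑ y, Ω x y * T y j) • auxEv x j)) T :=
    HasFDerivAt.fun_sum fun x _ => HasFDerivAt.fun_sum fun j _ => (base x j).fun_mul (hinner x j)
  have hlog : ∀ (x : V) (j : Fin c),
      HasFDerivAt (fun S : V → Fin c → ℝ => Real.log (S x j)) ((T x j)⁻¹ • auxEv x j) T :=
    fun x j => by
      have := (Real.hasDerivAt_log (hT x j)).comp_hasFDerivAt T (base x j); exact this
  have hent : HasFDerivAt (fun S : V → Fin c → ℝ => ∑ x, ∑ j, S x j * Real.log (S x j))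
      (∑ x, ∑ j, (T x j • ((T x j)⁻¹ • auxEv x j) + Real.log (T x j) • auxEv x j)) T :=
    HasFDerivAt.fun_sum fun x _ => HasFDerivAt.fun_sum fun j _ => (base x j).fun_mul (hlog x j)
  have hall := (hquad.const_mul (1 / 2 : ℝ)).fun_add (hent.const_mul γ)
  refine hall.congr_fderiv ?_
  ext w
  simp only [auxD1, ContinuousLinearMap.add_apply, ContinuousLinearMap.coe_smul',
    ContinuousLinearMap.coe_sum', Finset.sum_apply, Pi.smul_apply, smul_eq_mul, auxEv_apply,
    ContinuousLinearMap.smul_apply, ContinuousLinearMap.sum_apply]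
  have hL : ∑ x, ∑ j, ((∑ y, Ω x y * T y j) + γ * (Real.log (T x j) + 1)) * w x j
      = (∑ x, ∑ j, (∑ y, Ω x y * T y j) * w x j)
        + γ * (∑ x, ∑ j, Real.log (T x j) * w x j) + γ * (∑ x, ∑ j, w x j) := by
    rw [Finset.mul_sum, Finset.mul_sum, ← Finset.sum_add_distrib, ← Finset.sum_add_distrib]
    refine Finset.sum_congr rfl fun x _ => ?_
    rw [Finset.mul_sum, Finset.mul_sum, ← Finset.sum_add_distrib, ← Finset.sum_add_distrib]
    exact Finset.sum_congr rfl fun j _ => by ring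
  have hR1 : ∑ x, ∑ j, (T x j * ∑ y, Ω x y * w y j + (∑ y, Ω x y * T y j) * w x j)
      = (∑ x, ∑ j, (∑ y, Ω x y * T y j) * w x j)
        + (∑ x, ∑ j, (∑ y, Ω x y * T y j) * w x j) := by
    simp only [Finset.sum_add_distrib]
    rw [aux_swap Ω hsymm T w]
  have hR2 : ∑ x, ∑ j, (T x j * ((T x j)⁻¹ * w x j) + Real.log (T x j) * w x j)
      = (∑ x, ∑ j, w x j) + (∑ x, ∑ j, Real.log (T x j) * w x j) := by
    simp only [Finset.sum_add_distrib]
    congr 1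
    refine Finset.sum_congr rfl fun x _ => Finset.sum_congr rfl fun j _ => ?_
    rw [← mul_assoc, mul_inv_cancel₀ (hT x j), one_mul]
  rw [hL, hR1, hR2]
  ring

lemma aux_hasD2 (Ω : V → V → ℝ) (γ : ℝ) (T : V → Fin c → ℝ) (hT : ∀ x j, T x j ≠ 0) :
    HasFDerivAt (auxD1 Ω γ : (V → Fin c → ℝ) → _) (auxD2 Ω γ T) T := by
  have base : ∀ (x : V) (j : Fin c),
      HasFDerivAt (fun S : V → Fin c → ℝ => S x j) (auxEv x j) T :=
    fun x j => (auxEv x j).hasFDerivAt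
  have hinner : ∀ (x : V) (j : Fin c),
      HasFDerivAt (fun S : V → Fin c → ℝ => ∑ y, Ω x y * S y j)
        (∑ y, Ω x y • auxEv y j) T :=
    fun x j => HasFDerivAt.fun_sum fun y _ => (base y j).const_mul (Ω x y)
  have hlog : ∀ (x : V) (j : Fin c),
      HasFDerivAt (fun S : V → Fin c → ℝ => Real.log (S x j)) ((T x j)⁻¹ • auxEv x j) T :=
    fun x j => by
      have := (Real.hasDerivAt_log (hT x j)).comp_hasFDerivAt T (base x j); exact this
  exact HasFDerivAt.fun_sum fun x _ => HasFDerivAt.fun_sum fun j _ =>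
    (((hinner x j).fun_add (((hlog x j).add_const 1).const_mul γ)).smul_const (auxEv x j))

lemma aux_second (Ω : V → V → ℝ) (hsymm : ∀ x y, Ω x y = Ω y x) (γ : ℝ)
    (S : V → Fin c → ℝ) (hS : ∀ x j, S x j ≠ 0) (v : V → Fin c → ℝ) :
    iteratedFDeriv ℝ 2 (fun S : V → Fin c → ℝ =>
        (1 / 2) * (∑ x, ∑ j, S x j * ∑ y, Ω x y * S y j)
          + γ * ∑ x, ∑ j, S x j * Real.log (S x j)) S ![v, v]
      = (∑ x, ∑ y, ∑ j, Ω x y * v x j * v y j)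
        + γ * ∑ x, ∑ j, (v x j) ^ 2 / S x j := by
  rw [iteratedFDeriv_two_apply]
  have hUev : ∀ᶠ T in nhds S, ∀ (x : V) (j : Fin c), T x j ≠ 0 := by
    refine Filter.eventually_all.2 fun x => Filter.eventually_all.2 fun j => ?_
    exact ((continuous_apply j).comp (continuous_apply x)).continuousAt.eventually_ne (hS x j)
  have h1 : (fderiv ℝ (fun S : V → Fin c → ℝ =>
        (1 / 2) * (∑ x, ∑ j, S x j * ∑ y, Ω x y * S y j)
          + γ * ∑ x, ∑ j, S x j * Real.log (S x j))) =ᶠ[nhds S] auxD1 Ω γ :=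
    hUev.mono fun T hT => (aux_hasD1 Ω hsymm γ T hT).fderiv
  rw [h1.fderiv_eq, (aux_hasD2 Ω γ S hS).fderiv]
  simp only [Matrix.cons_val_zero, Matrix.cons_val_one, Matrix.head_cons]
  simp only [auxD2, ContinuousLinearMap.sum_apply, ContinuousLinearMap.smulRight_apply,
    ContinuousLinearMap.add_apply, ContinuousLinearMap.smul_apply, auxEv_apply, smul_eq_mul]
  have hsplit : ∑ x, ∑ j, (∑ y, Ω x y * v y j + γ * ((S x j)⁻¹ * v x j)) * v x j
      = (∑ x, ∑ j, (∑ y, Ω x y * v y j) * v x j) + γ * ∑ x, ∑ j, (v x j) ^ 2 / S x j := by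
    rw [Finset.mul_sum, ← Finset.sum_add_distrib]
    refine Finset.sum_congr rfl fun x _ => ?_
    rw [Finset.mul_sum, ← Finset.sum_add_distrib]
    refine Finset.sum_congr rfl fun j _ => ?_
    rw [div_eq_mul_inv]
    ring
  rw [hsplit]
  congr 1
  refine Finset.sum_congr rfl fun x _ => ?_
  calc ∑ j, (∑ y, Ω x y * v y j) * v x j
      = ∑ j, ∑ y, Ω x y * v x j * v y j := by
        refine Finset.sum_congr rfl fun j _ => ?_
        rw [Finset.sum_mul]
        exact Finset.sum_congr rfl fun y _ => by ring
    _ = ∑ y, ∑ j, Ω x y * v x j * v y j := Finset.sum_comm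

end AuxCalc

noncomputable section

/-! ### auxiliary convexity of t log t - t²/2 on (0,1) -/

lemma aux_g_hasDeriv {t : ℝ} (ht : t ≠ 0) :
    HasDerivAt (fun t : ℝ => t * Real.log t - t ^ 2 / 2) (Real.log t + 1 - t) t := by
  have h1 : HasDerivAt (fun t : ℝ => t * Real.log t) (Real.log t + 1) t := by
    have := (hasDerivAt_id t).mul (Real.hasDerivAt_log ht)
    refine this.congr_deriv ?_
    simp only [id_eq, one_mul, mul_inv_cancel₀ ht]
  have h2 : HasDerivAt (fun t : ℝ => t ^ 2 / 2) t t := by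
    have := (hasDerivAt_pow 2 t).div_const 2
    refine this.congr_deriv ?_
    ring
  exact h1.sub h2

lemma aux_g_convexOn :
    ConvexOn ℝ (Set.Ioo (0 : ℝ) 1) (fun t : ℝ => t * Real.log t - t ^ 2 / 2) := by
  set g : ℝ → ℝ := fun t => t * Real.log t - t ^ 2 / 2 with hg
  have hderiv : ∀ t : ℝ, t ≠ 0 → deriv g t = Real.log t + 1 - t :=
    fun t ht => (aux_g_hasDeriv ht).deriv
  have hderivev : ∀ t : ℝ, t ≠ 0 →
      deriv g =ᶠ[nhds t] fun s => Real.log s + 1 - s := by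
    intro t ht
    have : ∀ᶠ s in nhds t, s ≠ (0:ℝ) := continuousAt_id.eventually_ne ht
    exact this.mono fun s hs => hderiv s hs
  have hd2 : ∀ t : ℝ, t ≠ 0 → deriv (deriv g) t = t⁻¹ - 1 := by
    intro t ht
    rw [(hderivev t ht).deriv_eq]
    have : HasDerivAt (fun s : ℝ => Real.log s + 1 - s) (t⁻¹ - 1) t := by
      have := ((Real.hasDerivAt_log ht).add_const 1).fun_sub (hasDerivAt_id t)
      exact this
    exact this.deriv
  have hint : interior (Set.Ioo (0:ℝ) 1) = Set.Ioo (0:ℝ) 1 := interior_Ioo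
  refine convexOn_of_deriv2_nonneg (convex_Ioo 0 1) ?_ ?_ ?_ ?_
  · -- continuity
    refine ContinuousOn.sub (ContinuousOn.mul continuousOn_id ?_) ?_
    · exact Real.continuousOn_log.mono (fun t ht => ne_of_gt ht.1)
    · exact (continuous_pow 2).continuousOn.div_const 2
  · intro t ht
    rw [hint] at ht
    exact ((aux_g_hasDeriv (ne_of_gt ht.1)).differentiableAt).differentiableWithinAt
  · intro t ht
    rw [hint] at ht
    have : DifferentiableAt ℝ (fun s : ℝ => Real.log s + 1 - s) t :=
      (((Real.hasDerivAt_log (ne_of_gt ht.1)).add_const 1).sub (hasDerivAt_id t)).differentiableAt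
    exact ((hderivev t (ne_of_gt ht.1)).differentiableAt_iff.2 this).differentiableWithinAt
  · intro t ht
    rw [hint] at ht
    show 0 ≤ deriv^[2] g t
    have h2 : deriv^[2] g t = deriv (deriv g) t := by
      simp [Function.iterate_succ, Function.iterate_zero, Function.comp]
    rw [h2, hd2 t (ne_of_gt ht.1)]
    have h1 : 1 ≤ t⁻¹ := by
      rw [le_inv_comm₀] <;> simp [ht.1, ht.2.le]
    linarith

end

noncomputable section

lemma aux_triple {V : Type*} [Fintype V] {c : ℕ} (Ω : V → V → ℝ) (S w : V → Fin c → ℝ) :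
    ∑ x, ∑ j, S x j * ∑ y, Ω x y * w y j = ∑ x, ∑ y, ∑ j, Ω x y * S x j * w y j := by
  refine Finset.sum_congr rfl fun x _ => ?_
  calc ∑ j, S x j * ∑ y, Ω x y * w y j
      = ∑ j, ∑ y, Ω x y * S x j * w y j := by
        refine Finset.sum_congr rfl fun j _ => ?_
        rw [Finset.mul_sum]
        exact Finset.sum_congr rfl fun y _ => by ring
    _ = ∑ y, ∑ j, Ω x y * S x j * w y j := Finset.sum_comm

lemma aux_quad_lb3 {V : Type*} [Fintype V] {c : ℕ} (Ω : V → V → ℝ)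
    (hsymm : ∀ x y, Ω x y = Ω y x) (lammin : ℝ)
    (hlb : ∀ μ : ℝ, (∃ v : V → ℝ, v ≠ 0 ∧ ∀ x, ∑ y, Ω x y * v y = μ * v x) → lammin ≤ μ)
    (w : V → Fin c → ℝ) :
    lammin * ∑ x, ∑ j, w x j ^ 2 ≤ ∑ x, ∑ y, ∑ j, Ω x y * w x j * w y j := by
  have hswap : ∑ x, ∑ y, ∑ j, Ω x y * w x j * w y j
      = ∑ j, ∑ x, ∑ y, Ω x y * w x j * w y j := by
    rw [show (∑ x, ∑ y, ∑ j, Ω x y * w x j * w y j)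
        = ∑ x, ∑ j, ∑ y, Ω x y * w x j * w y j from
      Finset.sum_congr rfl fun x _ => Finset.sum_comm]
    exact Finset.sum_comm
  have hswap2 : (∑ x, ∑ j, w x j ^ 2) = ∑ j, ∑ x, w x j ^ 2 := Finset.sum_comm
  rw [hswap, hswap2, Finset.mul_sum]
  exact Finset.sum_le_sum fun j _ => aux_quad_lb Ω hsymm lammin hlb (fun x => w x j)

lemma aux_Q_combo {V : Type*} [Fintype V] {c : ℕ} (B : V → V → ℝ)
    (S T : V → Fin c → ℝ) (a b : ℝ) (hab : a + b = 1) :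
    ∑ x, ∑ y, ∑ j, B x y * (a • S + b • T) x j * (a • S + b • T) y j
      = a * (∑ x, ∑ y, ∑ j, B x y * S x j * S y j)
        + b * (∑ x, ∑ y, ∑ j, B x y * T x j * T y j)
        - a * b * (∑ x, ∑ y, ∑ j, B x y * (S - T) x j * (S - T) y j) := by
  have key : ∀ (x y : V) (j : Fin c),
      B x y * (a • S + b • T) x j * (a • S + b • T) y j
        = a * (B x y * S x j * S y j) + b * (B x y * T x j * T y j)
          - a * b * (B x y * (S - T) x j * (S - T) y j) := by
    intro x y j
    simp only [Pi.add_apply, Pi.smul_apply, Pi.sub_apply, smul_eq_mul]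
    have hb : b = 1 - a := by linarith
    subst hb
    ring
  calc ∑ x, ∑ y, ∑ j, B x y * (a • S + b • T) x j * (a • S + b • T) y j
      = ∑ x, ∑ y, ∑ j, (a * (B x y * S x j * S y j) + b * (B x y * T x j * T y j)
          - a * b * (B x y * (S - T) x j * (S - T) y j)) :=
        Finset.sum_congr rfl fun x _ => Finset.sum_congr rfl fun y _ =>
          Finset.sum_congr rfl fun j _ => key x y j
    _ = _ := by
        simp only [Finset.sum_sub_distrib, Finset.sum_add_distrib, ← Finset.mul_sum]

lemma aux_coord {c : ℕ} (hc : 2 ≤ c) (f : Fin c → ℝ) (hpos : ∀ j, 0 < f j)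
    (hsum : ∑ j, f j = 1) (j : Fin c) : f j ∈ Set.Ioo (0 : ℝ) 1 := by
  refine ⟨hpos j, ?_⟩
  obtain ⟨j', hj'⟩ := Fintype.exists_ne_of_one_lt_card (by simp; omega) j
  have hfj : f j = ∑ k, if k = j then f k else 0 := by
    rw [Finset.sum_ite_eq']
    simp
  rw [hfj, ← hsum]
  refine Finset.sum_lt_sum (fun k _ => ?_) ⟨j', Finset.mem_univ j', ?_⟩
  · by_cases h : k = j <;> simp [h, (hpos k).le]
  · simp [hj', hpos j']

end

noncomputable section

open Finset

theorem statement6 {V : Type*} [Fintype V] {c : ℕ} (hc : 2 ≤ c)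
    (Ω : V → V → ℝ) (hsymm : ∀ x y, Ω x y = Ω y x)
    (lammin : ℝ)
    (heig : ∃ v : V → ℝ, v ≠ 0 ∧ ∀ x, ∑ y, Ω x y * v y = lammin * v x)
    (hlb : ∀ μ : ℝ, (∃ v : V → ℝ, v ≠ 0 ∧ ∀ x, ∑ y, Ω x y * v y = μ * v x) → lammin ≤ μ)
    (γ : ℝ) (hγ : |lammin| < γ)
    (hfun : (V → Fin c → ℝ) → ℝ)
    (hdef : ∀ S : V → Fin c → ℝ,
      hfun S = (1 / 2) * (∑ x, ∑ j, S x j * ∑ y, Ω x y * S y j)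
        + γ * ∑ x, ∑ j, S x j * Real.log (S x j)) :
    (∀ S : V → Fin c → ℝ, (∀ x, (∀ j, 0 < S x j) ∧ ∑ j, S x j = 1) →
      ∀ v : V → Fin c → ℝ, (∑ x, ∑ j, (v x j) ^ 2) = 1 →
        (iteratedFDeriv ℝ 2 hfun S ![v, v]
            = (∑ x, ∑ y, ∑ j, Ω x y * v x j * v y j)
              + γ * ∑ x, ∑ j, (v x j) ^ 2 / S x j)
        ∧ lammin + γ
            < (∑ x, ∑ y, ∑ j, Ω x y * v x j * v y j)
              + γ * ∑ x, ∑ j, (v x j) ^ 2 / S x j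
        ∧ 0 < lammin + γ)
    ∧ StrictConvexOn ℝ {S : V → Fin c → ℝ | ∀ x, (∀ j, 0 < S x j) ∧ ∑ j, S x j = 1} hfun := by
  classical
  have hγpos : 0 < γ := lt_of_le_of_lt (abs_nonneg lammin) hγ
  have hlg : 0 < lammin + γ := by
    have := neg_abs_le lammin
    linarith
  set B : V → V → ℝ := fun x y => Ω x y + (if x = y then γ else 0) with hB
  set Q : (V → Fin c → ℝ) → ℝ := fun w => ∑ x, ∑ y, ∑ j, B x y * w x j * w y j with hQ
  have hQsplit : ∀ w : V → Fin c → ℝ,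
      Q w = (∑ x, ∑ y, ∑ j, Ω x y * w x j * w y j) + γ * ∑ x, ∑ j, w x j ^ 2 := by
    intro w
    have h1 : ∀ x y : V, ∑ j, B x y * w x j * w y j
        = (∑ j, Ω x y * w x j * w y j) + (if x = y then ∑ j, γ * (w x j * w y j) else 0) := by
      intro x y
      by_cases h : x = y
      · subst h
        simp only [hB, if_true, ← Finset.sum_add_distrib]
        exact Finset.sum_congr rfl fun j _ => by ring
      · simp only [hB, h, if_false, add_zero]
    have h2 : Q w = (∑ x, ∑ y, ∑ j, Ω x y * w x j * w y j)
        + ∑ x, ∑ y, (if x = y then ∑ j, γ * (w x j * w y j) else 0) := by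
      rw [hQ]
      simp only [← Finset.sum_add_distrib]
      exact Finset.sum_congr rfl fun x _ => Finset.sum_congr rfl fun y _ => h1 x y
    rw [h2]
    congr 1
    rw [Finset.mul_sum]
    refine Finset.sum_congr rfl fun x _ => ?_
    rw [Finset.sum_ite_eq, if_pos (Finset.mem_univ x), Finset.mul_sum]
    exact Finset.sum_congr rfl fun j _ => by ring
  have hQlb : ∀ w : V → Fin c → ℝ,
      (lammin + γ) * (∑ x, ∑ j, w x j ^ 2) ≤ Q w := by
    intro w
    rw [hQsplit w]
    have h1 := aux_quad_lb3 Ω hsymm lammin hlb w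
    have h2 : (lammin + γ) * (∑ x, ∑ j, w x j ^ 2)
        = lammin * (∑ x, ∑ j, w x j ^ 2) + γ * ∑ x, ∑ j, w x j ^ 2 := by ring
    rw [h2]
    linarith
  set g : ℝ → ℝ := fun t => t * Real.log t - t ^ 2 / 2 with hgdef
  have hfun_eq : ∀ S : V → Fin c → ℝ,
      hfun S = (1 / 2) * Q S + γ * ∑ x, ∑ j, g (S x j) := by
    intro S
    rw [hdef S, hQsplit S, aux_triple Ω S S]
    have h2 : ∑ x, ∑ j, g (S x j)
        = (∑ x, ∑ j, S x j * Real.log (S x j)) - (∑ x, ∑ j, S x j ^ 2) / 2 := by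
      simp only [hgdef, Finset.sum_sub_distrib, ← Finset.sum_div]
    rw [h2]
    ring
  constructor
  · -- second derivative formula and bound
    intro S hS v hv
    have hSpos : ∀ x j, 0 < S x j := fun x j => (hS x).1 j
    have hSne : ∀ x j, S x j ≠ 0 := fun x j => ne_of_gt (hSpos x j)
    have hff : hfun = fun S : V → Fin c → ℝ =>
        (1 / 2) * (∑ x, ∑ j, S x j * ∑ y, Ω x y * S y j)
          + γ * ∑ x, ∑ j, S x j * Real.log (S x j) := funext hdef
    refine ⟨by rw [hff]; exact aux_second Ω hsymm γ S hSne v, ?_, hlg⟩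
    have hA : lammin ≤ ∑ x, ∑ y, ∑ j, Ω x y * v x j * v y j := by
      have h := aux_quad_lb3 Ω hsymm lammin hlb v
      rw [hv, mul_one] at h
      exact h
    have hvex : ∃ x j, v x j ≠ 0 := by
      by_contra h
      push_neg at h
      have : (∑ x, ∑ j, (v x j) ^ 2) = 0 := by simp [h]
      rw [this] at hv
      norm_num at hv
    obtain ⟨x₀, j₀, hv0⟩ := hvex
    have hcoord : ∀ x j, S x j ∈ Set.Ioo (0 : ℝ) 1 :=
      fun x j => aux_coord hc (S x) (hS x).1 (hS x).2 j
    have hterm : ∀ x j, v x j ^ 2 ≤ v x j ^ 2 / S x j := by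
      intro x j
      rw [le_div_iff₀ (hSpos x j)]
      nlinarith [sq_nonneg (v x j), (hcoord x j).2.le, (hSpos x j)]
    have hsum_lt : (∑ x, ∑ j, v x j ^ 2) < ∑ x, ∑ j, v x j ^ 2 / S x j := by
      refine Finset.sum_lt_sum (fun x _ => Finset.sum_le_sum fun j _ => hterm x j)
        ⟨x₀, Finset.mem_univ x₀, Finset.sum_lt_sum (fun j _ => hterm x₀ j)
          ⟨j₀, Finset.mem_univ j₀, ?_⟩⟩
      rw [lt_div_iff₀ (hSpos x₀ j₀)]
      have hv2 : 0 < v x₀ j₀ ^ 2 := by positivity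
      nlinarith [(hcoord x₀ j₀).2]
    have hγmul : γ * (∑ x, ∑ j, v x j ^ 2) < γ * ∑ x, ∑ j, v x j ^ 2 / S x j :=
      mul_lt_mul_of_pos_left hsum_lt hγpos
    rw [hv, mul_one] at hγmul
    linarith
  · -- strict convexity
    constructor
    · -- convexity of the domain
      intro S hS T hT a b ha hb hab
      simp only [Set.mem_setOf_eq] at hS hT ⊢
      intro x
      constructor
      · intro j
        show 0 < a * S x j + b * T x j
        rcases eq_or_lt_of_le ha with h | h
        · have hb1 : b = 1 := by linarith
          rw [← h, hb1]
          simpa using (hT x).1 j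
        · exact add_pos_of_pos_of_nonneg (mul_pos h ((hS x).1 j))
            (mul_nonneg hb ((hT x).1 j).le)
      · show ∑ j, (a * S x j + b * T x j) = 1
        rw [Finset.sum_add_distrib, ← Finset.mul_sum, ← Finset.mul_sum,
          (hS x).2, (hT x).2, mul_one, mul_one]
        exact hab
    · intro S hS T hT hne a b ha hb hab
      simp only [Set.mem_setOf_eq] at hS hT
      have hScoord : ∀ x j, S x j ∈ Set.Ioo (0 : ℝ) 1 :=
        fun x j => aux_coord hc (S x) (hS x).1 (hS x).2 j
      have hTcoord : ∀ x j, T x j ∈ Set.Ioo (0 : ℝ) 1 :=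
        fun x j => aux_coord hc (T x) (hT x).1 (hT x).2 j
      have hQc : Q (a • S + b • T) = a * Q S + b * Q T - a * b * Q (S - T) := by
        simp only [hQ]
        exact aux_Q_combo B S T a b hab
      have hdne : ∃ x j, S x j ≠ T x j := by
        by_contra h
        push_neg at h
        exact hne (funext fun x => funext fun j => h x j)
      obtain ⟨x₁, j₁, hd1⟩ := hdne
      have hdsq : 0 < ∑ x, ∑ j, (S - T) x j ^ 2 := by
        refine Finset.sum_pos' (fun x _ => Finset.sum_nonneg fun j _ => sq_nonneg _)
          ⟨x₁, Finset.mem_univ x₁,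
            Finset.sum_pos' (fun j _ => sq_nonneg _) ⟨j₁, Finset.mem_univ j₁, ?_⟩⟩
        have hne' : (S - T) x₁ j₁ ≠ 0 := by
          simp only [Pi.sub_apply]
          exact sub_ne_zero_of_ne hd1
        exact lt_of_le_of_ne (sq_nonneg _) (Ne.symm (pow_ne_zero 2 hne'))
      have hQd : 0 < Q (S - T) :=
        lt_of_lt_of_le (mul_pos hlg hdsq) (hQlb (S - T))
      have hent : ∑ x, ∑ j, g ((a • S + b • T) x j)
          ≤ a * (∑ x, ∑ j, g (S x j)) + b * (∑ x, ∑ j, g (T x j)) := by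
        rw [Finset.mul_sum, Finset.mul_sum, ← Finset.sum_add_distrib]
        refine Finset.sum_le_sum fun x _ => ?_
        rw [Finset.mul_sum, Finset.mul_sum, ← Finset.sum_add_distrib]
        refine Finset.sum_le_sum fun j _ => ?_
        have := aux_g_convexOn.2 (hScoord x j) (hTcoord x j) ha.le hb.le hab
        simpa only [smul_eq_mul, Pi.add_apply, Pi.smul_apply, hgdef] using this
      have hentγ : γ * (∑ x, ∑ j, g ((a • S + b • T) x j))
          ≤ γ * (a * (∑ x, ∑ j, g (S x j)) + b * (∑ x, ∑ j, g (T x j))) :=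
        mul_le_mul_of_nonneg_left hent hγpos.le
      have habd : 0 < a * b * Q (S - T) := mul_pos (mul_pos ha hb) hQd
      rw [hfun_eq, hfun_eq, hfun_eq, hQc]
      simp only [smul_eq_mul]
      nlinarith [habd, hentγ]
end
end

section
/- Let V̄ = V ⊍ V_I be a finite set, α : V̄×V̄ → ℝ antisymmetric with α(x,y) = 0 whenever x,y ∈ V_I, Θ : V̄×V̄ → ℝ symmetric and nonnegative, Ω(x,y) = Θ(x,y)α(x,y)² for x ≠ y with Ω(x,x) = Θ(x,x), and λ(x) = Σ_{y∈V̄} Θ(x,y)α(x,y)² + Θ(x,x). Assume λ(x) = 1 for all x ∈ V, that the graph on V with edges {(x,y) : Ω(x,y) > 0} is connected, and that Θ(x̃,ỹ)·α(x̃,ỹ)² > 0 for some x̃ ∈ V, ỹ ∈ V_I. Then: (a) for every f : V̄ → ℝ vanishing on V_I, −½·Σ_{x∈V̄} f(x)·D^α(Θ·G^α(f))(x) = Σ_{x∈V} f(x)·(λ(x)f(x) − Σ_{y∈V}Ω(x,y)f(y)); and (b) the smallest Dirichlet eigenvalue λ₁^D = inf{ Σ_{x∈V} f(x)·(λ(x)f(x)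 − Σ_{y∈V}Ω(x,y)f(y)) / Σ_{x∈V} f(x)² : f : V̄ → ℝ, f ≠ 0, f = 0 on V_I } is strictly positive. -/
open Finset

noncomputable section

/-- Auxiliary quadratic form. -/
def qf {V : Type*} [Fintype V] (lam : V → ℝ) (Ω : V → V → ℝ) (g : V → ℝ) : ℝ :=
  ∑ x, g x * (lam x * g x - ∑ y, Ω x y * g y)

/-- Auxiliary norm-square. -/
def nf {V : Type*} [Fintype V] (g : V → ℝ) : ℝ := ∑ x, g x ^ 2

lemma qf_cont {V : Type*} [Fintype V] (lam : V → ℝ) (Ω : V → V → ℝ) :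
    Continuous (qf lam Ω) := by
  apply continuous_finset_sum; intro x _
  exact (continuous_apply x).mul (((continuous_const.mul (continuous_apply x))).sub
    (continuous_finset_sum _ fun y _ => continuous_const.mul (continuous_apply y)))

lemma nf_cont {V : Type*} [Fintype V] : Continuous (nf (V := V)) :=
  continuous_finset_sum _ fun x _ => (continuous_apply x).pow 2

lemma qf_hom {V : Type*} [Fintype V] (lam : V → ℝ) (Ω : V → V → ℝ) (c : ℝ) (g : V → ℝ) :
    qf lam Ω (c • g) = c ^ 2 * qf lam Ω g := by
  unfold qf
  rw [Finset.mul_sum]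
  refine Finset.sum_congr rfl fun x _ => ?_
  have : ∑ y, Ω x y * (c • g) y = c * ∑ y, Ω x y * g y := by
    rw [Finset.mul_sum]
    exact Finset.sum_congr rfl fun y _ => by simp [mul_comm, mul_left_comm]
  rw [this]
  simp only [Pi.smul_apply, smul_eq_mul]
  ring

lemma nf_hom {V : Type*} [Fintype V] (c : ℝ) (g : V → ℝ) :
    nf (c • g) = c ^ 2 * nf g := by
  unfold nf
  rw [Finset.mul_sum]
  exact Finset.sum_congr rfl fun x _ => by simp [mul_pow]

lemma walk_const {V : Type*} (G : SimpleGraph V) (g : V → ℝ)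
    (h : ∀ x y, G.Adj x y → g x = g y) {x y : V} (hr : G.Reachable x y) : g x = g y := by
  obtain ⟨p⟩ := hr
  induction p with
  | nil => rfl
  | cons a _ ih => exact (h _ _ a).trans ih

theorem statement15 {V VI : Type*} [Fintype V] [Fintype VI] [DecidableEq V]
    (α Θ : (V ⊕ VI) → (V ⊕ VI) → ℝ)
    (hα : ∀ x y, α y x = - α x y)
    (hαI : ∀ x y : VI, α (Sum.inr x) (Sum.inr y) = 0)
    (hΘsymm : ∀ x y, Θ x y = Θ y x)
    (hΘnn : ∀ x y, 0 ≤ Θ x y)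
    (Ω : V → V → ℝ)
    (hΩ : ∀ x y : V, Ω x y =
      if x = y then Θ (Sum.inl x) (Sum.inl x)
      else Θ (Sum.inl x) (Sum.inl y) * (α (Sum.inl x) (Sum.inl y)) ^ 2)
    (lam : V → ℝ)
    (hlam : ∀ x : V,
      lam x = (∑ y, Θ (Sum.inl x) y * (α (Sum.inl x) y) ^ 2) + Θ (Sum.inl x) (Sum.inl x))
    (hlam1 : ∀ x : V, lam x = 1)
    (hconn : (SimpleGraph.fromRel (fun x y : V => 0 < Ω x y)).Connected)
    (hint : ∃ (x : V) (y : VI),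
      0 < Θ (Sum.inl x) (Sum.inr y) * (α (Sum.inl x) (Sum.inr y)) ^ 2) :
    (∀ f : (V ⊕ VI) → ℝ, (∀ z : VI, f (Sum.inr z) = 0) →
      -(1 / 2) * ∑ x : V ⊕ VI, f x * nlDiv α (fun p q => Θ p q * nlGrad α f p q) x
        = ∑ x : V, f (Sum.inl x) * (lam x * f (Sum.inl x) - ∑ y, Ω x y * f (Sum.inl y)))
    ∧ 0 < sInf { r : ℝ | ∃ f : (V ⊕ VI) → ℝ,
        (∀ z : VI, f (Sum.inr z) = 0) ∧ f ≠ 0 ∧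
        r = (∑ x : V, f (Sum.inl x) * (lam x * f (Sum.inl x) - ∑ y, Ω x y * f (Sum.inl y)))
            / (∑ x : V, f (Sum.inl x) ^ 2) } := by
  -- basic facts
  have hself : ∀ x, α x x = 0 := fun x => by have := hα x x; linarith
  set w : V → V → ℝ := fun x y => Θ (Sum.inl x) (Sum.inl y) * α (Sum.inl x) (Sum.inl y) ^ 2
    with hw_def
  set b : V → ℝ := fun x => ∑ y : VI, Θ (Sum.inl x) (Sum.inr y) * α (Sum.inl x) (Sum.inr y) ^ 2
    with hb_def
  have hwsymm : ∀ x y, w x y = w y x := by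
    intro x y
    simp only [hw_def]
    rw [hΘsymm, hα]
    ring
  have hwnn : ∀ x y, 0 ≤ w x y := fun x y => mul_nonneg (hΘnn _ _) (sq_nonneg _)
  have hbnn : ∀ x, 0 ≤ b x := fun x =>
    Finset.sum_nonneg fun y _ => mul_nonneg (hΘnn _ _) (sq_nonneg _)
  have hwself : ∀ x, w x x = 0 := fun x => by simp [hw_def, hself]
  have hΩw : ∀ x y, x ≠ y → Ω x y = w x y := fun x y h => by rw [hΩ]; simp [h, hw_def]
  -- lam decomposition
  have hlam' : ∀ x : V, lam x = (∑ y : V, w x y) + b x + Θ (Sum.inl x) (Sum.inl x) := by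
    intro x
    rw [hlam x, Fintype.sum_sum_type]
  -- Ω-sum decomposition
  have step2 : ∀ (x : V) (g : V → ℝ),
      ∑ y, Ω x y * g y = Θ (Sum.inl x) (Sum.inl x) * g x + ∑ y, w x y * g y := by
    intro x g
    have h1 : ∀ y, Ω x y * g y =
        (if x = y then (Θ (Sum.inl x) (Sum.inl x) - w x y) * g y else 0) + w x y * g y := by
      intro y
      rw [hΩ]
      by_cases h : x = y
      · subst h
        simp [hwself x]
      · simp [h, hw_def]
    rw [Finset.sum_congr rfl fun y _ => h1 y, Finset.sum_add_distrib, Finset.sum_ite_eq]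
    simp [hwself x]
  -- the quadratic form identity
  have hqid : ∀ g : V → ℝ, qf lam Ω g =
      (∑ x, b x * g x ^ 2) + (1 / 2) * ∑ x, ∑ y, w x y * (g x - g y) ^ 2 := by
    intro g
    have e1 : qf lam Ω g = (∑ x, b x * g x ^ 2)
        + ∑ x, ∑ y, (w x y * g x ^ 2 - w x y * (g x * g y)) := by
      unfold qf
      rw [← Finset.sum_add_distrib]
      refine Finset.sum_congr rfl fun x _ => ?_
      rw [hlam' x, step2 x g, Finset.sum_sub_distrib]
      have h2 : ∑ y, w x y * g x ^ 2 = (∑ y : V, w x y) * g x ^ 2 := by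
        rw [Finset.sum_mul]
      have h3 : ∑ y, w x y * (g x * g y) = g x * ∑ y, w x y * g y := by
        rw [Finset.mul_sum]
        exact Finset.sum_congr rfl fun y _ => by ring
      rw [h2, h3]
      ring
    have e2 : ∑ x, ∑ y, w x y * (g x - g y) ^ 2
        = 2 * ∑ x, ∑ y, (w x y * g x ^ 2 - w x y * (g x * g y)) := by
      have swap : ∑ x, ∑ y, (w x y * g y ^ 2 - w x y * (g x * g y))
          = ∑ x, ∑ y, (w x y * g x ^ 2 - w x y * (g x * g y)) := by
        rw [Finset.sum_comm]
        exact Finset.sum_congr rfl fun x _ => Finset.sum_congr rfl fun y _ => by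
          rw [hwsymm y x]; ring
      have expand : ∀ x y, w x y * (g x - g y) ^ 2 =
          (w x y * g x ^ 2 - w x y * (g x * g y))
            + (w x y * g y ^ 2 - w x y * (g x * g y)) := fun x y => by ring
      rw [Finset.sum_congr rfl fun x _ => Finset.sum_congr rfl fun y _ => expand x y]
      simp only [Finset.sum_add_distrib]
      rw [swap]
      ring
    rw [e1, e2]
    ring
  -- positivity of the quadratic form
  have hqpos : ∀ g : V → ℝ, g ≠ 0 → 0 < qf lam Ω g := by
    intro g hg
    rw [hqid g]
    have hBnn : ∀ x, (0:ℝ) ≤ ∑ y, w x y * (g x - g y) ^ 2 := fun x =>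
      Finset.sum_nonneg fun y _ => mul_nonneg (hwnn x y) (sq_nonneg _)
    have hA : 0 ≤ ∑ x, b x * g x ^ 2 :=
      Finset.sum_nonneg fun x _ => mul_nonneg (hbnn x) (sq_nonneg _)
    have hB : 0 ≤ ∑ x, ∑ y, w x y * (g x - g y) ^ 2 :=
      Finset.sum_nonneg fun x _ => hBnn x
    by_contra hcon
    push_neg at hcon
    have hA0 : ∑ x, b x * g x ^ 2 = 0 := by linarith
    have hB0 : ∑ x, ∑ y, w x y * (g x - g y) ^ 2 = 0 := by linarith
    have hBz : ∀ x y : V, w x y * (g x - g y) ^ 2 = 0 := by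
      intro x y
      have h1 := (Finset.sum_eq_zero_iff_of_nonneg (fun x _ => hBnn x)).mp hB0 x (mem_univ x)
      exact (Finset.sum_eq_zero_iff_of_nonneg
        (fun y _ => mul_nonneg (hwnn x y) (sq_nonneg _))).mp h1 y (mem_univ y)
    -- g is constant by connectedness
    have hconst : ∀ x y : V, g x = g y := by
      intro x y
      refine walk_const _ g ?_ (hconn.preconnected x y)
      intro a c hadj
      rw [SimpleGraph.fromRel_adj] at hadj
      obtain ⟨hne, hor⟩ := hadj
      have hw : 0 < w a c := by
        rcases hor with h1 | h1
        · rwa [hΩw a c hne] at h1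
        · rw [hΩw c a (Ne.symm hne)] at h1
          rwa [hwsymm a c]
      have h2 : (g a - g c) ^ 2 = 0 :=
        (mul_eq_zero.mp (hBz a c)).resolve_left (ne_of_gt hw)
      have := pow_eq_zero_iff (n := 2) (by norm_num) |>.mp h2
      linarith [this]
    obtain ⟨xt, yt, hxt⟩ := hint
    have hbpos : 0 < b xt := by
      refine Finset.sum_pos' (fun y _ => mul_nonneg (hΘnn _ _) (sq_nonneg _)) ⟨yt, mem_univ _, hxt⟩
    have hAz : b xt * g xt ^ 2 = 0 :=
      (Finset.sum_eq_zero_iff_of_nonneg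
        (fun x _ => mul_nonneg (hbnn x) (sq_nonneg _))).mp hA0 xt (mem_univ xt)
    have hgxt : g xt = 0 := by
      have h2 : g xt ^ 2 = 0 := (mul_eq_zero.mp hAz).resolve_left (ne_of_gt hbpos)
      exact pow_eq_zero_iff (n := 2) (by norm_num) |>.mp h2
    obtain ⟨x0, hx0⟩ := Function.ne_iff.mp hg
    exact hx0 (by simpa using (hconst x0 xt).trans hgxt)
  -- Part (a)
  have partA : ∀ f : (V ⊕ VI) → ℝ, (∀ z : VI, f (Sum.inr z) = 0) →
      -(1 / 2) * ∑ x : V ⊕ VI, f x * nlDiv α (fun p q => Θ p q * nlGrad α f p q) x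
        = ∑ x : V, f (Sum.inl x) * (lam x * f (Sum.inl x) - ∑ y, Ω x y * f (Sum.inl y)) := by
    intro f hf
    have lhsT : -(1 / 2) * ∑ x : V ⊕ VI, f x * nlDiv α (fun p q => Θ p q * nlGrad α f p q) x
        = ∑ x : V ⊕ VI, ∑ y : V ⊕ VI, Θ x y * α x y ^ 2 * (f x ^ 2 - f x * f y) := by
      unfold nlDiv nlGrad
      rw [Finset.mul_sum]
      refine Finset.sum_congr rfl fun x _ => ?_
      rw [Finset.mul_sum, Finset.mul_sum]
      refine Finset.sum_congr rfl fun y _ => ?_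
      beta_reduce
      rw [hΘsymm y x, hα x y]
      ring
    rw [lhsT, Fintype.sum_sum_type]
    have hinr : ∀ x : VI, ∑ y : V ⊕ VI,
        Θ (Sum.inr x) y * α (Sum.inr x) y ^ 2 * (f (Sum.inr x) ^ 2 - f (Sum.inr x) * f y) = 0 := by
      intro x
      refine Finset.sum_eq_zero fun y _ => by rw [hf x]; ring
    rw [Finset.sum_congr rfl fun x _ => hinr x, Finset.sum_const_zero, add_zero]
    refine Finset.sum_congr rfl fun x _ => ?_
    rw [Fintype.sum_sum_type]
    have hVIpart : ∑ y : VI, Θ (Sum.inl x) (Sum.inr y) * α (Sum.inl x) (Sum.inr y) ^ 2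
        * (f (Sum.inl x) ^ 2 - f (Sum.inl x) * f (Sum.inr y)) = b x * f (Sum.inl x) ^ 2 := by
      rw [hb_def, Finset.sum_mul]
      exact Finset.sum_congr rfl fun y _ => by rw [hf y]; ring
    rw [hVIpart, hlam' x, step2 x (fun y => f (Sum.inl y))]
    have hVpart : ∑ y : V, Θ (Sum.inl x) (Sum.inl y) * α (Sum.inl x) (Sum.inl y) ^ 2
        * (f (Sum.inl x) ^ 2 - f (Sum.inl x) * f (Sum.inl y))
        = (∑ y : V, w x y) * f (Sum.inl x) ^ 2
          - f (Sum.inl x) * ∑ y : V, w x y * f (Sum.inl y) := by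
      rw [Finset.sum_mul, Finset.mul_sum, ← Finset.sum_sub_distrib]
      exact Finset.sum_congr rfl fun y _ => by simp only [hw_def]; ring
    rw [hVpart]
    ring
  refine ⟨partA, ?_⟩
  -- Part (b)
  obtain ⟨xt, yt, hxt⟩ := hint
  -- compact unit sphere
  set K : Set (V → ℝ) := {g | nf g = 1} with hK_def
  have hKclosed : IsClosed K := isClosed_eq nf_cont continuous_const
  have hKbdd : Bornology.IsBounded K := by
    rw [Metric.isBounded_iff_subset_closedBall 0]
    refine ⟨1, fun g hg => ?_⟩
    rw [Metric.mem_closedBall, dist_zero_right]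
    rw [pi_norm_le_iff_of_nonneg zero_le_one]
    intro i
    rw [Real.norm_eq_abs, ← sq_le_one_iff_abs_le_one]
    have : g i ^ 2 ≤ nf g := Finset.single_le_sum (fun x _ => sq_nonneg (g x)) (mem_univ i)
    rw [hg] at this
    exact this
  have hKcomp : IsCompact K := Metric.isCompact_of_isClosed_isBounded hKclosed hKbdd
  have hKne : K.Nonempty := by
    refine ⟨fun x => if x = xt then 1 else 0, ?_⟩
    simp only [hK_def, Set.mem_setOf_eq, nf]
    have : ∀ x : V, ((if x = xt then (1:ℝ) else 0)) ^ 2 = if x = xt then 1 else 0 := by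
      intro x; by_cases h : x = xt <;> simp [h]
    rw [Finset.sum_congr rfl fun x _ => this x, Finset.sum_ite_eq']
    simp
  obtain ⟨g₀, hg₀K, hg₀min⟩ := hKcomp.exists_isMinOn hKne (qf_cont lam Ω).continuousOn
  have hg₀ne : g₀ ≠ 0 := by
    intro h
    have : nf g₀ = 1 := hg₀K
    rw [h] at this
    simp [nf] at this
  have hm : 0 < qf lam Ω g₀ := hqpos g₀ hg₀ne
  -- key bound: for every nonzero g, qf g₀ ≤ qf g / nf g
  have hbound : ∀ g : V → ℝ, g ≠ 0 → qf lam Ω g₀ ≤ qf lam Ω g / nf g := by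
    intro g hg
    have hng : 0 < nf g := by
      obtain ⟨x0, hx0⟩ := Function.ne_iff.mp hg
      refine Finset.sum_pos' (fun x _ => sq_nonneg _) ⟨x0, mem_univ _, ?_⟩
      have : g x0 ≠ 0 := by simpa using hx0
      positivity
    set t := Real.sqrt (nf g) with ht_def
    have ht : 0 < t := Real.sqrt_pos.mpr hng
    have ht2 : t ^ 2 = nf g := Real.sq_sqrt hng.le
    have hmem : t⁻¹ • g ∈ K := by
      simp only [hK_def, Set.mem_setOf_eq, nf_hom]
      rw [← ht2]
      field_simp
    have h1 : qf lam Ω g₀ ≤ qf lam Ω (t⁻¹ • g) := hg₀min hmem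
    rw [qf_hom] at h1
    calc qf lam Ω g₀ ≤ t⁻¹ ^ 2 * qf lam Ω g := h1
      _ = qf lam Ω g / nf g := by
        rw [inv_pow, ht2, div_eq_inv_mul]
  refine lt_of_lt_of_le hm (le_csInf ?_ ?_)
  · -- nonempty
    refine ⟨qf lam Ω g₀ / nf g₀, Sum.elim g₀ 0, fun z => rfl, ?_, rfl⟩
    intro h
    apply hg₀ne
    funext x
    have := congrFun h (Sum.inl x)
    simpa using this
  · rintro r ⟨f, hf0, hfne, rfl⟩
    set g : V → ℝ := fun x => f (Sum.inl x) with hg_def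
    have hgne : g ≠ 0 := by
      intro h
      apply hfne
      funext z
      cases z with
      | inl x => exact congrFun h x
      | inr x => exact hf0 x
    exact hbound g hgne
end
end

section
/- Let V̄ = V ⊍ V_I be a finite set, α : V̄×V̄ → ℝ antisymmetric with α(x,y) = 0 whenever x,y ∈ V_I, Θ : V̄×V̄ → ℝ symmetric and nonnegative, Ω(x,y) = Θ(x,y)α(x,y)² for x ≠ y with Ω(x,x) = Θ(x,x), and λ(x) = Σ_{y∈V̄} Θ(x,y)α(x,y)² + Θ(x,x). Assume λ(x) = 1 for all x ∈ V, that the graph on V with edges {(x,y) : Ω(x,y) > 0} is connected, and that Θ(x̃,ỹ)·α(x̃,ỹ)² > 0 for some x̃ ∈ V, ỹ ∈ V_I. Then the smallest eigenvalue of the symmetric matrix (Ω(x,y))_{x,y∈V} satisfies λ_min(Ω) > −1. -/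
open Finset

noncomputable section

theorem statement16 {V VI : Type*} [Fintype V] [Fintype VI] [DecidableEq V]
    (α Θ : (V ⊕ VI) → (V ⊕ VI) → ℝ)
    (hα : ∀ x y, α y x = - α x y)
    (hαI : ∀ x y : VI, α (Sum.inr x) (Sum.inr y) = 0)
    (hΘsymm : ∀ x y, Θ x y = Θ y x)
    (hΘnn : ∀ x y, 0 ≤ Θ x y)
    (Ω : V → V → ℝ)
    (hΩ : ∀ x y : V, Ω x y =
      if x = y then Θ (Sum.inl x) (Sum.inl x)
      else Θ (Sum.inl x) (Sum.inl y) * (α (Sum.inl x) (Sum.inl y)) ^ 2)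
    (lam : V → ℝ)
    (hlam : ∀ x : V,
      lam x = (∑ y, Θ (Sum.inl x) y * (α (Sum.inl x) y) ^ 2) + Θ (Sum.inl x) (Sum.inl x))
    (hlam1 : ∀ x : V, lam x = 1)
    (hconn : (SimpleGraph.fromRel (fun x y : V => 0 < Ω x y)).Connected)
    (hint : ∃ (x : V) (y : VI),
      0 < Θ (Sum.inl x) (Sum.inr y) * (α (Sum.inl x) (Sum.inr y)) ^ 2)
    (lammin : ℝ)
    (heig : ∃ v : V → ℝ, v ≠ 0 ∧ ∀ x, ∑ y, Ω x y * v y = lammin * v x)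
    (hlb : ∀ μ : ℝ, (∃ v : V → ℝ, v ≠ 0 ∧ ∀ x, ∑ y, Ω x y * v y = μ * v x) → lammin ≤ μ) :
    -1 < lammin := by
  obtain ⟨v, hv0, hev⟩ := heig
  have hαzero : ∀ x, α x x = 0 := fun x => by have := hα x x; linarith
  have hΩnn : ∀ x y, 0 ≤ Ω x y := by
    intro x y; rw [hΩ]; split
    · exact hΘnn _ _
    · exact mul_nonneg (hΘnn _ _) (sq_nonneg _)
  have hΩsymm : ∀ x y, Ω x y = Ω y x := by
    intro x y
    rcases eq_or_ne x y with h | h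
    · rw [h]
    · rw [hΩ, hΩ, if_neg h, if_neg h.symm, hΘsymm, hα (Sum.inl x) (Sum.inl y)]
      ring
  -- row sums
  have hrow : ∀ x : V, ∑ y, Ω x y =
      1 - ∑ y : VI, Θ (Sum.inl x) (Sum.inr y) * α (Sum.inl x) (Sum.inr y) ^ 2 := by
    intro x
    have h1 : ∑ y, Ω x y =
        (∑ y : V, Θ (Sum.inl x) (Sum.inl y) * α (Sum.inl x) (Sum.inl y) ^ 2)
          + Θ (Sum.inl x) (Sum.inl x) := by
      have he : ∀ y : V, Ω x y =
          Θ (Sum.inl x) (Sum.inl y) * α (Sum.inl x) (Sum.inl y) ^ 2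
            + (if x = y then Θ (Sum.inl x) (Sum.inl x) else 0) := by
        intro y; rw [hΩ]; rcases eq_or_ne x y with h | h
        · subst h; simp [hαzero]
        · simp [h]
      rw [Finset.sum_congr rfl (fun y _ => he y), Finset.sum_add_distrib]
      simp
    have h2 := hlam x
    rw [hlam1, Fintype.sum_sum_type] at h2
    rw [h1]; linarith
  have hrowle : ∀ x : V, ∑ y, Ω x y ≤ 1 := by
    intro x; rw [hrow]
    have : (0:ℝ) ≤ ∑ y : VI, Θ (Sum.inl x) (Sum.inr y) * α (Sum.inl x) (Sum.inr y) ^ 2 :=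
      Finset.sum_nonneg fun y _ => mul_nonneg (hΘnn _ _) (sq_nonneg _)
    linarith
  obtain ⟨xt, yt, hxt⟩ := hint
  have hrowlt : ∑ y, Ω xt y < 1 := by
    rw [hrow]
    have : (0:ℝ) < ∑ y : VI, Θ (Sum.inl xt) (Sum.inr y) * α (Sum.inl xt) (Sum.inr y) ^ 2 :=
      Finset.sum_pos' (fun y _ => mul_nonneg (hΘnn _ _) (sq_nonneg _))
        ⟨yt, Finset.mem_univ _, hxt⟩
    linarith
  -- max of |v|
  obtain ⟨x1, hx1⟩ := Function.ne_iff.mp hv0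
  have : Nonempty V := ⟨x1⟩
  obtain ⟨x0, -, hx0⟩ := Finset.exists_max_image Finset.univ (fun x => |v x|)
    ⟨x1, Finset.mem_univ x1⟩
  set M := |v x0| with hM
  have hMle : ∀ x : V, |v x| ≤ M := fun x => hx0 x (Finset.mem_univ x)
  have hMpos : 0 < M := lt_of_lt_of_le (abs_pos.mpr hx1) (hMle x1)
  -- key bound
  have key : ∀ x : V, |lammin| * |v x| ≤ (∑ y, Ω x y) * M := by
    intro x
    calc |lammin| * |v x| = |lammin * v x| := (abs_mul _ _).symm
      _ = |∑ y, Ω x y * v y| := by rw [hev x]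
      _ ≤ ∑ y, |Ω x y * v y| := Finset.abs_sum_le_sum_abs _ _
      _ = ∑ y, Ω x y * |v y| := by
          refine Finset.sum_congr rfl fun y _ => ?_
          rw [abs_mul, abs_of_nonneg (hΩnn x y)]
      _ ≤ ∑ y, Ω x y * M :=
          Finset.sum_le_sum fun y _ => mul_le_mul_of_nonneg_left (hMle y) (hΩnn x y)
      _ = (∑ y, Ω x y) * M := (Finset.sum_mul _ _ _).symm
  have habs : |lammin| ≤ 1 := by
    have h := key x0
    have h2 : (∑ y, Ω x0 y) * M ≤ 1 * M :=
      mul_le_mul_of_nonneg_right (hrowle x0) hMpos.le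
    rw [← hM] at h
    nlinarith
  by_contra hcon
  push_neg at hcon
  have hlm : lammin = -1 := by
    rcases abs_le.mp habs with ⟨h1, _⟩
    linarith
  -- closure lemma
  have closed : ∀ x y : V, |v x| = M → 0 < Ω x y → |v y| = M := by
    intro x y hx hΩxy
    by_contra hy
    have hylt : |v y| < M := lt_of_le_of_ne (hMle y) hy
    have h1 : M ≤ ∑ z, Ω x z * |v z| := by
      calc M = |lammin| * |v x| := by rw [hlm, hx]; simp
        _ = |lammin * v x| := (abs_mul _ _).symm
        _ = |∑ z, Ω x z * v z| := by rw [hev x]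
        _ ≤ ∑ z, |Ω x z * v z| := Finset.abs_sum_le_sum_abs _ _
        _ = ∑ z, Ω x z * |v z| := by
            refine Finset.sum_congr rfl fun z _ => ?_
            rw [abs_mul, abs_of_nonneg (hΩnn x z)]
    have h2 : ∑ z, Ω x z * |v z| < ∑ z, Ω x z * M := by
      apply Finset.sum_lt_sum
        (fun z _ => mul_le_mul_of_nonneg_left (hMle z) (hΩnn x z))
      exact ⟨y, Finset.mem_univ y, by
        exact mul_lt_mul_of_pos_left hylt hΩxy⟩
    have h3 : ∑ z, Ω x z * M ≤ M := by
      rw [← Finset.sum_mul]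
      calc (∑ z, Ω x z) * M ≤ 1 * M :=
            mul_le_mul_of_nonneg_right (hrowle x) hMpos.le
        _ = M := one_mul M
    linarith
  -- propagate along walks
  have step : ∀ (a b : V)
      (w : (SimpleGraph.fromRel (fun x y : V => 0 < Ω x y)).Walk a b),
      |v a| = M → |v b| = M := by
    intro a b w
    induction w with
    | nil => exact id
    | cons hadj p ih =>
      intro ha
      apply ih
      rw [SimpleGraph.fromRel_adj] at hadj
      rcases hadj.2 with h | h
      · exact closed _ _ ha h
      · exact closed _ _ ha (by rw [hΩsymm]; exact h)
  have hall : ∀ x : V, |v x| = M := by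
    intro x
    obtain ⟨w⟩ := hconn.preconnected x0 x
    exact step x0 x w rfl
  -- final contradiction at xt
  have h1 : M ≤ ∑ z, Ω xt z * |v z| := by
    calc M = |lammin| * |v xt| := by rw [hlm, hall xt]; simp
      _ = |lammin * v xt| := (abs_mul _ _).symm
      _ = |∑ z, Ω xt z * v z| := by rw [hev xt]
      _ ≤ ∑ z, |Ω xt z * v z| := Finset.abs_sum_le_sum_abs _ _
      _ = ∑ z, Ω xt z * |v z| := by
          refine Finset.sum_congr rfl fun z _ => ?_
          rw [abs_mul, abs_of_nonneg (hΩnn xt z)]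
  have h2 : ∑ z, Ω xt z * |v z| = (∑ z, Ω xt z) * M := by
    rw [Finset.sum_mul]
    exact Finset.sum_congr rfl fun z _ => by rw [hall z]
  have h3 : (∑ z, Ω xt z) * M < 1 * M :=
    mul_lt_mul_of_pos_right hrowlt hMpos
  linarith
end
end
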